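/- Let V be the free ℤ-module on {1, X}. Consider the chain complex C⁰ = V⊗V⊗V → C¹ = (V⊗V) ⊕ (V⊗V) → C² = V, where d⁰ = (m₁₂ ⊗ id applied appropriately, id ⊗ m₂₃), i.e. d⁰(v) = ((m⊗id)(v), (id⊗m)(v)), and d¹(a, b) = m(a) − m(b). Then d¹ ∘ d⁰ = 0 and ker d¹ = im d⁰, i.e. the homology at the middle term vanishes. -/

import Mathlib

open TensorProduct

/-- The Khovanov Frobenius algebra `V = ℤ⟨1, X⟩` modeled as `ℤ × ℤ`
(first coordinate: coefficient of `1`, second: coefficient of `X`). -/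
abbrev V : Type := ℤ × ℤ

/-- The basis vector `1`. -/
def e1 : V := (1, 0)

/-- The basis vector `X`. -/
def eX : V := (0, 1)

/-- Khovanov multiplication: `m(1⊗1)=1, m(1⊗X)=m(X⊗1)=X, m(X⊗X)=0`. -/
noncomputable def m : V ⊗[ℤ] V →ₗ[ℤ] V :=
  TensorProduct.lift <| LinearMap.mk₂ ℤ
    (fun v w => (v.1 * w.1, v.1 * w.2 + v.2 * w.1))
    (by intro a b c; simp [Prod.ext_iff]; constructor <;> ring)
    (by intro z a b; simp [Prod.ext_iff]; constructor <;> ring)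
    (by intro a b c; simp [Prod.ext_iff]; constructor <;> ring)
    (by intro z a b; simp [Prod.ext_iff]; constructor <;> ring)

/-- Khovanov comultiplication: `Δ(1)=1⊗X+X⊗1, Δ(X)=X⊗X`. -/
noncomputable def Δ : V →ₗ[ℤ] V ⊗[ℤ] V where
  toFun v := v.1 • (e1 ⊗ₜ[ℤ] eX + eX ⊗ₜ[ℤ] e1) + v.2 • (eX ⊗ₜ[ℤ] eX)
  map_add' a b := by simp [add_smul]; abel
  map_smul' z a := by simp [mul_smul, smul_add]
/-- Degree-0 differential of the cube for the closure of `σ₁σ₂` on 3 strands: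
`v ↦ ((m ⊗ id)(v), (id ⊗ m)(v))`. -/
noncomputable def d0 : (V ⊗[ℤ] V) ⊗[ℤ] V →ₗ[ℤ] (V ⊗[ℤ] V) × (V ⊗[ℤ] V) :=
  LinearMap.prod (TensorProduct.map m LinearMap.id)
    (TensorProduct.map LinearMap.id m ∘ₗ (TensorProduct.assoc ℤ V V V).toLinearMap)

/-- Degree-1 differential: `(a, b) ↦ m(a) - m(b)`. -/
noncomputable def d1 : (V ⊗[ℤ] V) × (V ⊗[ℤ] V) →ₗ[ℤ] V :=
  m ∘ₗ LinearMap.fst ℤ (V ⊗[ℤ] V) (V ⊗[ℤ] V) -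
    m ∘ₗ LinearMap.snd ℤ (V ⊗[ℤ] V) (V ⊗[ℤ] V)

/-!
Only two properties of `m` matter: it is associative, which gives `d1 ∘ d0 = 0`, and it has
the unit `1`, which gives exactness. If `m a = m b = c`, then
`1 ⊗ a + b ⊗ 1 - 1 ⊗ c ⊗ 1` is sent by `d0` to `(a, b)`, because
`d0 (1 ⊗ a) = (a, 1 ⊗ c)`, `d0 (b ⊗ 1) = (c ⊗ 1, b)` and `d0 (1 ⊗ c ⊗ 1) = (c ⊗ 1, 1 ⊗ c)`.
-/

section PartialMuls

variable {R A : Type*} [CommRing R] [AddCommGroup A] [Module R A] (μ : A ⊗[R] A →ₗ[R] A)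

noncomputable def partialMuls : (A ⊗[R] A) ⊗[R] A →ₗ[R] (A ⊗[R] A) × (A ⊗[R] A) :=
  LinearMap.prod (map μ LinearMap.id)
    (map LinearMap.id μ ∘ₗ (TensorProduct.assoc R A A A).toLinearMap)

noncomputable def mulFstSubMulSnd : (A ⊗[R] A) × (A ⊗[R] A) →ₗ[R] A :=
  μ ∘ₗ LinearMap.fst R (A ⊗[R] A) (A ⊗[R] A) - μ ∘ₗ LinearMap.snd R (A ⊗[R] A) (A ⊗[R] A)

theorem mulFstSubMulSnd_comp_partialMuls
    (h_assoc : μ ∘ₗ map μ LinearMap.id =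
      μ ∘ₗ map LinearMap.id μ ∘ₗ (TensorProduct.assoc R A A A).toLinearMap) :
    mulFstSubMulSnd μ ∘ₗ partialMuls μ = 0 := by
  simp only [mulFstSubMulSnd, partialMuls, LinearMap.sub_comp, LinearMap.comp_assoc,
    LinearMap.fst_prod, LinearMap.snd_prod, h_assoc, sub_self]

variable {μ} {e : A}

theorem map_mul_id_assoc_symm_unit_tmul (h_left : ∀ x, μ (e ⊗ₜ x) = x) (a : A ⊗[R] A) :
    map μ LinearMap.id ((TensorProduct.assoc R A A A).symm (e ⊗ₜ a)) = a := by
  induction a using TensorProduct.induction_on with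
  | zero => simp
  | tmul x y => simp [h_left]
  | add a b ha hb => rw [tmul_add, map_add, map_add, ha, hb]

theorem map_id_mul_assoc_tmul_unit (h_right : ∀ x, μ (x ⊗ₜ e) = x) (b : A ⊗[R] A) :
    map LinearMap.id μ (TensorProduct.assoc R A A A (b ⊗ₜ e)) = b := by
  induction b using TensorProduct.induction_on with
  | zero => simp
  | tmul x y => simp [h_right]
  | add a b ha hb => rw [add_tmul, map_add, map_add, ha, hb]

theorem partialMuls_unit_tmul_sub (h_left : ∀ x, μ (e ⊗ₜ x) = x)
    (h_right : ∀ x, μ (x ⊗ₜ e) = x) {a b : A ⊗[R] A} (hab : μ a = μ b) :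
    partialMuls μ ((TensorProduct.assoc R A A A).symm (e ⊗ₜ a) + b ⊗ₜ e - (e ⊗ₜ μ a) ⊗ₜ e)
      = (a, b) := by
  simp only [partialMuls, map_sub, map_add, LinearMap.prod_apply, Function.prod,
    LinearMap.comp_apply, LinearEquiv.coe_coe, LinearEquiv.apply_symm_apply, map_tmul,
    LinearMap.id_apply, TensorProduct.assoc_tmul, map_mul_id_assoc_symm_unit_tmul h_left,
    map_id_mul_assoc_tmul_unit h_right, h_left, h_right, Prod.mk_add_mk, Prod.mk_sub_mk, hab,
    add_sub_cancel_right, add_sub_cancel_left]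

theorem ker_mulFstSubMulSnd_eq_range_partialMuls
    (h_assoc : μ ∘ₗ map μ LinearMap.id =
      μ ∘ₗ map LinearMap.id μ ∘ₗ (TensorProduct.assoc R A A A).toLinearMap)
    (h_left : ∀ x, μ (e ⊗ₜ x) = x) (h_right : ∀ x, μ (x ⊗ₜ e) = x) :
    LinearMap.ker (mulFstSubMulSnd μ) = LinearMap.range (partialMuls μ) := by
  refine le_antisymm ?_
    (LinearMap.range_le_ker_iff.mpr (mulFstSubMulSnd_comp_partialMuls μ h_assoc))
  rintro ⟨a, b⟩ hker
  have hab : μ a = μ b := by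
    simpa [mulFstSubMulSnd, sub_eq_zero] using hker
  exact ⟨_, partialMuls_unit_tmul_sub h_left h_right hab⟩

end PartialMuls

theorem m_tmul (v w : V) : m (v ⊗ₜ[ℤ] w) = (v.1 * w.1, v.1 * w.2 + v.2 * w.1) := by
  simp [m]; rfl

theorem m_assoc :
    m ∘ₗ map m LinearMap.id =
      m ∘ₗ map LinearMap.id m ∘ₗ (TensorProduct.assoc ℤ V V V).toLinearMap := by
  refine TensorProduct.ext_threefold fun u v w => ?_
  change m (m (u ⊗ₜ v) ⊗ₜ w) = m (u ⊗ₜ m (v ⊗ₜ w))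
  simp only [m_tmul, Prod.ext_iff]
  constructor <;> ring

theorem m_e1_tmul (v : V) : m (e1 ⊗ₜ v) = v := by
  simp [m_tmul, e1]

theorem m_tmul_e1 (v : V) : m (v ⊗ₜ e1) = v := by
  simp [m_tmul, e1]

/-- The cube complex of the closure of `σ₁σ₂` (an unknot diagram) is a complex
with vanishing homology at the middle term. -/
theorem khovanov_sigma1_sigma2_middle_homology_trivial :
    d1 ∘ₗ d0 = 0 ∧ LinearMap.ker d1 = LinearMap.range d0 :=
  ⟨mulFstSubMulSnd_comp_partialMuls m m_assoc,
    ker_mulFstSubMulSnd_eq_range_partialMuls m_assoc m_e1_tmul m_tmul_e1⟩
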